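/- For 1 ≤ k ≤ n, let I_{k,n} = ⋂ I_α be the intersection of all face ideals I_α with α ∈ {0,1}^n and |supp₊(α)| = k (all face ideals of pure height k). Then (I_{k,n}^{[q]} :_S I_{k,n}) = I_{k,n}^{[q]} + ((x_1⋯x_n)^{q-1}) for every q = p^e, e ≥ 1. (Hence the Frobenius algebra of the injective hull of the residue field of S/I_{k,n} is principally generated.) -/

import Mathlib

open MvPowerSeries

/-- The `q`-th Frobenius power `J^{[q]}` of an ideal `J`: the ideal generated by
the `q`-th powers of the elements of `J`. -/
noncomputable def frobeniusPower {R : Type*} [CommRing R] (J : Ideal R) (q : ℕ) : Ideal R :=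
  Ideal.span ((fun f => f ^ q) '' (J : Set R))

/-- The face ideal `I_α` associated to a set of indices `A = supp₊(α)`:
the ideal generated by the variables `x_i`, `i ∈ A`. -/
noncomputable def faceIdeal {n : ℕ} (K : Type*) [Field K] (A : Finset (Fin n)) :
    Ideal (MvPowerSeries (Fin n) K) :=
  Ideal.span ((fun i => (X i : MvPowerSeries (Fin n) K)) '' (A : Set (Fin n)))

section Aux

variable {n : ℕ} (K : Type*) [Field K]

/-- The monomial ideal with exponents in `E`. -/
noncomputable def monIdeal (E : Finset (Fin n →₀ ℕ)) : Ideal (MvPowerSeries (Fin n) K) :=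
  Ideal.span ((fun d => (monomial (R := K) d 1 : MvPowerSeries (Fin n) K)) '' (E : Set (Fin n →₀ ℕ)))

theorem mem_monIdeal {E : Finset (Fin n →₀ ℕ)} {f : MvPowerSeries (Fin n) K} :
    f ∈ monIdeal K E ↔ ∀ c, coeff (R := K) c f ≠ 0 → ∃ d ∈ E, d ≤ c := by
  classical
  constructor
  · intro hf
    induction hf using Submodule.span_induction with
    | mem x hx =>
      obtain ⟨d, hdE, rfl⟩ := hx
      intro c hc
      rw [coeff_monomial] at hc
      split_ifs at hc with h
      · exact ⟨d, hdE, h ▸ le_rfl⟩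
      · exact absurd rfl hc
    | zero => intro c hc; simp at hc
    | add x y hx hy ihx ihy =>
      intro c hc
      rw [map_add] at hc
      by_cases h : coeff (R := K) c x = 0
      · exact ihy c (by intro h'; rw [h, h', add_zero] at hc; exact hc rfl)
      · exact ihx c h
    | smul r x hx ih =>
      intro c hc
      rw [smul_eq_mul, coeff_mul] at hc
      obtain ⟨pq, hpq, hne⟩ := Finset.exists_ne_zero_of_sum_ne_zero hc
      obtain ⟨d, hdE, hd⟩ := ih pq.2 (right_ne_zero_of_mul hne)
      exact ⟨d, hdE, hd.trans (le_add_self.trans_eq (Finset.HasAntidiagonal.mem_antidiagonal.mp hpq))⟩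
  · intro H
    choose! dfun hdE hdle using H
    set g : (Fin n →₀ ℕ) → MvPowerSeries (Fin n) K := fun d =>
      (fun c' => if coeff (R := K) (c' + d) f ≠ 0 ∧ dfun (c' + d) = d then coeff (R := K) (c' + d) f else 0 :
        MvPowerSeries (Fin n) K) with hg
    have hcoe : ∀ d c', coeff (R := K) c' (g d) =
        if coeff (R := K) (c' + d) f ≠ 0 ∧ dfun (c' + d) = d then coeff (R := K) (c' + d) f else 0 :=
      fun d c' => rfl
    have hf : f = ∑ d ∈ E, g d * monomial (R := K) d 1 := by
      ext c
      rw [map_sum]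
      by_cases hc : coeff (R := K) c f = 0
      · rw [hc]
        refine (Finset.sum_eq_zero fun d _ => ?_).symm
        rw [coeff_mul_monomial]
        split_ifs with hle
        · rw [mul_one, hcoe, tsub_add_cancel_of_le hle, if_neg (by tauto)]
        · rfl
      · rw [Finset.sum_eq_single (dfun c)]
        · rw [coeff_mul_monomial, if_pos (hdle c hc), mul_one, hcoe,
            tsub_add_cancel_of_le (hdle c hc), if_pos ⟨hc, rfl⟩]
        · intro b _ hb
          rw [coeff_mul_monomial]
          split_ifs with hle
          · rw [mul_one, hcoe, tsub_add_cancel_of_le hle, if_neg (by tauto)]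
          · rfl
        · intro h; exact absurd (hdE c hc) h
    rw [hf]
    exact Ideal.sum_mem _ fun d hd =>
      Ideal.mul_mem_left _ _ (Ideal.subset_span ⟨d, Finset.mem_coe.mpr hd, rfl⟩)

/-- Exponent vector of the squarefree monomial supported on `B`. -/
noncomputable def chi (B : Finset (Fin n)) : Fin n →₀ ℕ := ∑ i ∈ B, Finsupp.single i 1

theorem chi_apply (B : Finset (Fin n)) (i : Fin n) : chi B i = if i ∈ B then 1 else 0 := by
  classical
  rw [chi, Finsupp.finset_sum_apply]
  simp [Finsupp.single_apply]

theorem smul_chi_le {q : ℕ} {B : Finset (Fin n)} {c : Fin n →₀ ℕ} :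
    q • chi B ≤ c ↔ ∀ i ∈ B, q ≤ c i := by
  classical
  rw [Finsupp.le_def]
  constructor
  · intro h i hi
    have h2 := h i
    rw [Finsupp.smul_apply, chi_apply, if_pos hi, smul_eq_mul, mul_one] at h2
    exact h2
  · intro h i
    rw [Finsupp.smul_apply, chi_apply]
    split_ifs with hi
    · rw [smul_eq_mul, mul_one]; exact h i hi
    · rw [smul_eq_mul, mul_zero]; exact Nat.zero_le _

theorem monomial_one_pow (d : Fin n →₀ ℕ) (q : ℕ) :
    (monomial (R := K) d 1 : MvPowerSeries (Fin n) K) ^ q = monomial (R := K) (q • d) 1 := by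
  induction q with
  | zero => simp
  | succ q ih => rw [pow_succ, ih, monomial_mul_monomial, one_mul, succ_nsmul]

theorem prod_X_eq (B : Finset (Fin n)) :
    (∏ i ∈ B, (X i : MvPowerSeries (Fin n) K)) = monomial (R := K) (chi B) 1 := by
  classical
  induction B using Finset.cons_induction with
  | empty => simp [chi]
  | cons a s ha ih =>
    rw [Finset.prod_cons, ih, X_def, monomial_mul_monomial, one_mul]
    congr 1
    rw [chi, chi, Finset.sum_cons]

theorem frobeniusPower_span {R : Type*} [CommRing R] (p : ℕ) [Fact p.Prime] [CharP R p]
    (e : ℕ) (S : Set R) :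
    frobeniusPower (Ideal.span S) (p ^ e) = Ideal.span ((fun f => f ^ p ^ e) '' S) := by
  have hq : p ^ e ≠ 0 := pow_ne_zero e (Nat.Prime.ne_zero Fact.out)
  apply le_antisymm
  · rw [frobeniusPower, Ideal.span_le]
    rintro _ ⟨f, hf, rfl⟩
    induction hf using Submodule.span_induction with
    | mem x hx => exact Ideal.subset_span ⟨x, hx, rfl⟩
    | zero =>
      show (0 : R) ^ p ^ e ∈ _
      rw [zero_pow hq]; exact zero_mem _
    | add x y hx hy ihx ihy =>
      show (x + y) ^ p ^ e ∈ _
      rw [add_pow_char_pow]; exact add_mem ihx ihy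
    | smul r x hx ih =>
      show (r • x) ^ p ^ e ∈ _
      rw [smul_eq_mul, mul_pow]; exact Ideal.mul_mem_left _ _ ih
  · rw [Ideal.span_le]
    rintro _ ⟨s, hs, rfl⟩
    exact Ideal.subset_span ⟨s, Ideal.subset_span hs, rfl⟩

theorem faceIdeal_eq (A : Finset (Fin n)) :
    faceIdeal K A = monIdeal K (A.image fun i => Finsupp.single i 1) := by
  have h : ((fun i => (X i : MvPowerSeries (Fin n) K)) '' (A : Set (Fin n)))
      = (fun d => (monomial (R := K) d 1 : MvPowerSeries (Fin n) K)) ''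
        ((A.image fun i => Finsupp.single i 1 : Finset (Fin n →₀ ℕ)) : Set (Fin n →₀ ℕ)) := by
    rw [Finset.coe_image, Set.image_image]
    exact Set.image_congr fun i _ => X_def i
  rw [faceIdeal, monIdeal, h]

theorem mem_faceIdeal {A : Finset (Fin n)} {f : MvPowerSeries (Fin n) K} :
    f ∈ faceIdeal K A ↔ ∀ c, coeff (R := K) c f ≠ 0 → ∃ i ∈ A, 1 ≤ c i := by
  rw [faceIdeal_eq, mem_monIdeal]
  refine forall₂_congr fun c hc => ?_
  constructor
  · rintro ⟨d, hd, hle⟩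
    rw [Finset.mem_image] at hd
    obtain ⟨i, hi, rfl⟩ := hd
    exact ⟨i, hi, Finsupp.single_le_iff.mp hle⟩
  · rintro ⟨i, hi, h⟩
    exact ⟨Finsupp.single i 1, Finset.mem_image_of_mem _ hi, Finsupp.single_le_iff.mpr h⟩

theorem comb1 {m : ℕ} (hmn : m ≤ n) (c : Fin n →₀ ℕ)
    (h : ∀ A : Finset (Fin n), A.card = m → ∃ i ∈ A, 1 ≤ c i) :
    ∃ B : Finset (Fin n), B.card = n - m + 1 ∧ ∀ i ∈ B, 1 ≤ c i := by
  classical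
  set Z := Finset.univ.filter (fun i => c i = 0) with hZ
  have hZcard : Z.card < m := by
    by_contra hge
    push_neg at hge
    obtain ⟨A, hAZ, hAcard⟩ := Finset.exists_subset_card_eq hge
    obtain ⟨i, hiA, hi⟩ := h A hAcard
    have h0 : c i = 0 := (Finset.mem_filter.mp (hAZ hiA)).2
    omega
  have hcompl : n - m + 1 ≤ (Finset.univ \ Z).card := by
    have h1 : (Finset.univ \ Z).card = n - Z.card := by
      rw [Finset.card_sdiff_of_subset (Finset.subset_univ Z), Finset.card_univ, Fintype.card_fin]
    have h2 : Z.card ≤ n := by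
      have := Finset.card_le_univ Z
      rwa [Fintype.card_fin] at this
    omega
  obtain ⟨B, hBsub, hBcard⟩ := Finset.exists_subset_card_eq hcompl
  refine ⟨B, hBcard, fun i hi => ?_⟩
  have hmem := hBsub hi
  rw [Finset.mem_sdiff, hZ, Finset.mem_filter] at hmem
  have : ¬ c i = 0 := fun h0 => hmem.2 ⟨Finset.mem_univ i, h0⟩
  omega

theorem comb1' {m : ℕ} (hmn : m ≤ n) {c : Fin n →₀ ℕ} {B : Finset (Fin n)}
    (hB : B.card = n - m + 1) (hc : ∀ i ∈ B, 1 ≤ c i)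
    (A : Finset (Fin n)) (hA : A.card = m) : ∃ i ∈ A, 1 ≤ c i := by
  have hinter : (A ∩ B).Nonempty := by
    rw [← Finset.card_pos]
    have h1 := Finset.card_union_add_card_inter A B
    have h2 : (A ∪ B).card ≤ n := by
      have := Finset.card_le_univ (A ∪ B)
      rwa [Fintype.card_fin] at this
    omega
  obtain ⟨i, hi⟩ := hinter
  rw [Finset.mem_inter] at hi
  exact ⟨i, hi.1, hc i hi.2⟩

theorem inf_eq_monIdeal {m : ℕ} (hm : 1 ≤ m) (hmn : m ≤ n) :
    (⨅ (A : Finset (Fin n)) (_ : A.card = m), faceIdeal K A)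
      = monIdeal K ((Finset.powersetCard (n - m + 1) Finset.univ).image chi) := by
  ext f
  simp only [Submodule.mem_iInf]
  rw [mem_monIdeal]
  constructor
  · intro h c hc
    have h' : ∀ A : Finset (Fin n), A.card = m → ∃ i ∈ A, 1 ≤ c i :=
      fun A hA => (mem_faceIdeal K).mp (h A hA) c hc
    obtain ⟨B, hBcard, hBc⟩ := comb1 hmn c h'
    refine ⟨chi B, Finset.mem_image_of_mem _
      (Finset.mem_powersetCard.mpr ⟨Finset.subset_univ _, hBcard⟩), ?_⟩
    have := smul_chi_le (q := 1) (B := B) (c := c)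
    rw [one_smul] at this
    exact this.mpr hBc
  · intro h A hA
    rw [mem_faceIdeal]
    intro c hc
    obtain ⟨d, hd, hle⟩ := h c hc
    rw [Finset.mem_image] at hd
    obtain ⟨B, hBmem, rfl⟩ := hd
    have hBcard := (Finset.mem_powersetCard.mp hBmem).2
    have hchile : ∀ i ∈ B, 1 ≤ c i := by
      have := smul_chi_le (q := 1) (B := B) (c := c)
      rw [one_smul] at this
      exact this.mp hle
    exact comb1' hmn hBcard hchile A hA

theorem mem_colon_monIdeal {E F : Finset (Fin n →₀ ℕ)} {f : MvPowerSeries (Fin n) K} :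
    f ∈ Submodule.colon (monIdeal K F) (monIdeal K E) ↔
      ∀ c, coeff (R := K) c f ≠ 0 → ∀ d ∈ E, ∃ d' ∈ F, d' ≤ c + d := by
  rw [Submodule.mem_colon]
  constructor
  · intro h c hc d hd
    have hmem : (monomial (R := K) d 1 : MvPowerSeries (Fin n) K) ∈ monIdeal K E :=
      Ideal.subset_span ⟨d, Finset.mem_coe.mpr hd, rfl⟩
    have h2 := h _ hmem
    rw [smul_eq_mul, mem_monIdeal] at h2
    apply h2 (c + d)
    rw [coeff_add_mul_monomial, mul_one]
    exact hc
  · intro H g hg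
    rw [smul_eq_mul]
    induction hg using Submodule.span_induction with
    | mem x hx =>
      obtain ⟨d, hd, rfl⟩ := hx
      rw [mem_monIdeal]
      intro c' hc'
      rw [coeff_mul_monomial] at hc'
      split_ifs at hc' with hle
      · rw [mul_one] at hc'
        obtain ⟨d', hd', h'⟩ := H _ hc' d (Finset.mem_coe.mp hd)
        refine ⟨d', hd', ?_⟩
        rwa [tsub_add_cancel_of_le hle] at h'
      · exact absurd rfl hc'
    | zero => rw [mul_zero]; exact zero_mem _
    | add x y _ _ ihx ihy => rw [mul_add]; exact add_mem ihx ihy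
    | smul r x _ ih =>
      rw [smul_eq_mul, mul_left_comm]
      exact Ideal.mul_mem_left _ _ ih

theorem comb2 {q r : ℕ} (hr : r ≤ n) (c : Fin n →₀ ℕ) :
    (∀ B ∈ Finset.powersetCard r (Finset.univ : Finset (Fin n)),
        ∃ B' ∈ Finset.powersetCard r (Finset.univ : Finset (Fin n)),
          ∀ i ∈ B', q ≤ c i + chi B i)
      ↔ ((∃ B' ∈ Finset.powersetCard r (Finset.univ : Finset (Fin n)),
            ∀ i ∈ B', q ≤ c i) ∨ ∀ i, q - 1 ≤ c i) := by
  classical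
  constructor
  · intro h
    by_contra hcon
    push_neg at hcon
    obtain ⟨h1, i₀, hi₀⟩ := hcon
    set T := Finset.univ.filter (fun i => q ≤ c i) with hT
    set U := Finset.univ.filter (fun i => q - 1 ≤ c i) with hU
    have hTcard : T.card < r := by
      by_contra hge
      push_neg at hge
      obtain ⟨B', hB'T, hB'card⟩ := Finset.exists_subset_card_eq hge
      obtain ⟨i, hiB', hilt⟩ := h1 B'
        (Finset.mem_powersetCard.mpr ⟨Finset.subset_univ _, hB'card⟩)
      have : q ≤ c i := (Finset.mem_filter.mp (hB'T hiB')).2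
      omega
    have hi₀U : i₀ ∉ U := by
      rw [hU, Finset.mem_filter]
      push_neg
      intro _
      omega
    set Cs := (Finset.univ \ U) ∪ T with hCs
    by_cases hC : r ≤ Cs.card
    · obtain ⟨B, hBC, hBcard⟩ := Finset.exists_subset_card_eq hC
      obtain ⟨B', hB'mem, hB'⟩ := h B
        (Finset.mem_powersetCard.mpr ⟨Finset.subset_univ _, hBcard⟩)
      have hsub : B' ⊆ T := by
        intro i hi
        have hqi := hB' i hi
        by_cases hiB : i ∈ B
        · have hiC := hBC hiB
          rw [hCs, Finset.mem_union] at hiC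
          rcases hiC with hiC | hiC
          · exfalso
            rw [Finset.mem_sdiff, hU, Finset.mem_filter] at hiC
            have hchi : chi B i = 1 := by rw [chi_apply, if_pos hiB]
            rw [hchi] at hqi
            have : ¬ (q - 1 ≤ c i) := fun hh => hiC.2 ⟨Finset.mem_univ _, hh⟩
            omega
          · exact hiC
        · have hchi : chi B i = 0 := by rw [chi_apply, if_neg hiB]
          rw [hchi] at hqi
          rw [hT, Finset.mem_filter]
          exact ⟨Finset.mem_univ _, by omega⟩
      have hle : r ≤ T.card := by
        have hcard := Finset.card_le_card hsub
        rwa [(Finset.mem_powersetCard.mp hB'mem).2] at hcard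
      omega
    · push_neg at hC
      obtain ⟨B, hCB, hBu, hBcard⟩ := Finset.exists_subsuperset_card_eq
        (Finset.subset_univ Cs) (le_of_lt hC)
        (by rw [Finset.card_univ, Fintype.card_fin]; exact hr)
      obtain ⟨B', hB'mem, hB'⟩ := h B (Finset.mem_powersetCard.mpr ⟨hBu, hBcard⟩)
      have hsub : B' ⊆ B \ (Finset.univ \ U) := by
        intro i hi
        have hqi := hB' i hi
        have hiB : i ∈ B := by
          by_contra hiB
          have hchi : chi B i = 0 := by rw [chi_apply, if_neg hiB]
          rw [hchi] at hqi
          have hiT : i ∈ T := by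
            rw [hT, Finset.mem_filter]
            exact ⟨Finset.mem_univ _, by omega⟩
          exact hiB (hCB (by rw [hCs]; exact Finset.mem_union_right _ hiT))
        have hchi : chi B i = 1 := by rw [chi_apply, if_pos hiB]
        rw [hchi] at hqi
        rw [Finset.mem_sdiff]
        refine ⟨hiB, fun hiU => ?_⟩
        rw [Finset.mem_sdiff, hU, Finset.mem_filter] at hiU
        exact hiU.2 ⟨Finset.mem_univ _, by omega⟩
      have hcardB' : B'.card = r := (Finset.mem_powersetCard.mp hB'mem).2
      have hUc_sub_B : (Finset.univ \ U) ⊆ B := fun i hi =>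
        hCB (by rw [hCs]; exact Finset.mem_union_left _ hi)
      have hcard : (B \ (Finset.univ \ U)).card = r - (Finset.univ \ U).card := by
        rw [Finset.card_sdiff_of_subset hUc_sub_B, hBcard]
      have hUc_pos : 1 ≤ (Finset.univ \ U).card :=
        Finset.card_pos.mpr ⟨i₀, Finset.mem_sdiff.mpr ⟨Finset.mem_univ _, hi₀U⟩⟩
      have hfin := Finset.card_le_card hsub
      omega
  · intro h B hB
    rcases h with ⟨B', hB'mem, hB'⟩ | h
    · exact ⟨B', hB'mem, fun i hi => le_trans (hB' i hi) (Nat.le_add_right _ _)⟩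
    · refine ⟨B, hB, fun i hi => ?_⟩
      have hchi : chi B i = 1 := by rw [chi_apply, if_pos hi]
      have hq := h i
      omega

end Aux

theorem colon_frobeniusPower_pure_height_k {K : Type*} [Field K] (p : ℕ)
    [Fact p.Prime] [CharP K p] (e : ℕ) (he : 1 ≤ e) {n : ℕ} (m : ℕ)
    (hm : 1 ≤ m) (hmn : m ≤ n) :
    Submodule.colon
        (frobeniusPower (⨅ (A : Finset (Fin n)) (_ : A.card = m), faceIdeal K A) (p ^ e))
        (⨅ (A : Finset (Fin n)) (_ : A.card = m), faceIdeal K A) =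
      frobeniusPower (⨅ (A : Finset (Fin n)) (_ : A.card = m), faceIdeal K A) (p ^ e) ⊔
        Ideal.span {(∏ i, (X i : MvPowerSeries (Fin n) K)) ^ (p ^ e - 1)} := by
  classical
  haveI : CharP (MvPowerSeries (Fin n) K) p :=
    charP_of_injective_ringHom
      (fun a b hab => by
        simpa using congrArg (constantCoeff (σ := Fin n) (R := K)) hab : Function.Injective (C (σ := Fin n) (R := K))) p
  set q := p ^ e with hqdef
  set r := n - m + 1 with hrdef
  have hrn : r ≤ n := by omega
  set E₁ := (Finset.powersetCard r (Finset.univ : Finset (Fin n))).image chi with hE₁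
  set Eq' := (Finset.powersetCard r (Finset.univ : Finset (Fin n))).image
    (fun B => q • chi B) with hEq
  have hI : (⨅ (A : Finset (Fin n)) (_ : A.card = m), faceIdeal K A) = monIdeal K E₁ :=
    inf_eq_monIdeal K hm hmn
  have hFrob : frobeniusPower (monIdeal K E₁) q = monIdeal K Eq' := by
    rw [monIdeal, hqdef, frobeniusPower_span p e, monIdeal]
    congr 1
    rw [hE₁, hEq, Finset.coe_image, Finset.coe_image,
      Set.image_image, Set.image_image, Set.image_image]
    exact Set.image_congr fun B _ => monomial_one_pow K (chi B) (p ^ e)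
  have hprod : (∏ i, (X i : MvPowerSeries (Fin n) K)) ^ (q - 1)
      = monomial (R := K) ((q - 1) • chi Finset.univ) 1 := by
    rw [prod_X_eq, monomial_one_pow]
  have hRHS : monIdeal K Eq' ⊔ Ideal.span {(∏ i, (X i : MvPowerSeries (Fin n) K)) ^ (q - 1)}
      = monIdeal K (Eq' ∪ {(q - 1) • chi Finset.univ}) := by
    rw [monIdeal, monIdeal, ← Ideal.span_union]
    congr 1
    rw [hprod, Finset.coe_union, Set.image_union, Finset.coe_singleton, Set.image_singleton]
  have hI' : (⨅ (A : Finset (Fin n)) (_ : A.card = m),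
      ((faceIdeal K A : Set (MvPowerSeries (Fin n) K))))
      = ((monIdeal K E₁ : Ideal _) : Set (MvPowerSeries (Fin n) K)) := by
    rw [← hI]; ext x; simp only [Set.iInf_eq_iInter, Set.mem_iInter, SetLike.mem_coe, Submodule.mem_iInf]
  rw [hI, hI', hFrob, hRHS]
  ext f
  rw [mem_colon_monIdeal, mem_monIdeal]
  refine forall₂_congr fun c hc => ?_
  constructor
  · intro h
    have h' : ∀ B ∈ Finset.powersetCard r (Finset.univ : Finset (Fin n)),
        ∃ B' ∈ Finset.powersetCard r (Finset.univ : Finset (Fin n)),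
          ∀ i ∈ B', q ≤ c i + chi B i := by
      intro B hBmem
      obtain ⟨d', hd', hle⟩ := h (chi B) (Finset.mem_image_of_mem _ hBmem)
      rw [hEq, Finset.mem_image] at hd'
      obtain ⟨B', hB'mem, rfl⟩ := hd'
      refine ⟨B', hB'mem, fun i hi => ?_⟩
      have h2 := smul_chi_le.mp hle i hi
      rwa [Finsupp.add_apply] at h2
    rcases (comb2 hrn c).mp h' with ⟨B', hB', hB'c⟩ | hall
    · exact ⟨q • chi B', Finset.mem_union_left _ (Finset.mem_image_of_mem _ hB'),
        smul_chi_le.mpr hB'c⟩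
    · exact ⟨(q - 1) • chi Finset.univ,
        Finset.mem_union_right _ (Finset.mem_singleton_self _),
        smul_chi_le.mpr fun i _ => hall i⟩
  · intro h d hd
    rw [hE₁, Finset.mem_image] at hd
    obtain ⟨B, hBmem, rfl⟩ := hd
    obtain ⟨d', hd', hle⟩ := h
    have hRHSc : (∃ B' ∈ Finset.powersetCard r (Finset.univ : Finset (Fin n)),
        ∀ i ∈ B', q ≤ c i) ∨ ∀ i, q - 1 ≤ c i := by
      rcases Finset.mem_union.mp hd' with hd'' | hd''
      · left
        rw [hEq, Finset.mem_image] at hd''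
        obtain ⟨B', hB'mem, rfl⟩ := hd''
        exact ⟨B', hB'mem, smul_chi_le.mp hle⟩
      · right
        rw [Finset.mem_singleton] at hd''
        subst hd''
        intro i
        exact smul_chi_le.mp hle i (Finset.mem_univ i)
    obtain ⟨B', hB'mem, hB'⟩ := (comb2 hrn c).mpr hRHSc B hBmem
    refine ⟨q • chi B', Finset.mem_image_of_mem _ hB'mem, smul_chi_le.mpr fun i hi => ?_⟩
    rw [Finsupp.add_apply]
    exact hB' i hi
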